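/- Let A ∈ SL(2,ℤ) with A ≠ I and A ≠ −I, and suppose A has finite order in PSL(2,ℤ), i.e. Aᵏ = I or Aᵏ = −I for some integer k ≥ 1. Then the set S of points v ∈ ℚ ∪ {∞} such that A·v = v or A·v is Farey-adjacent to v has at most three elements, no point of S is fixed by A, and any two elements of S are A-equivalent. -/
import Mathlib


open OnePoint Matrix

/-- `SL(2,ℤ)`. -/
abbrev SL2Z := Matrix.SpecialLinearGroup (Fin 2) ℤ

/-- The Möbius action of `SL(2,ℤ)` on the rational projective line `ℚ ∪ {∞}`:
the matrix `[[a,b],[c,d]]` sends `x` to `(ax+b)/(cx+d)` (and `∞ = 1/0`). -/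
def mob (A : SL2Z) : OnePoint ℚ → OnePoint ℚ
  | OnePoint.infty =>
      if (A.1 1 0 : ℚ) = 0 then OnePoint.infty
      else OnePoint.some ((A.1 0 0 : ℚ) / (A.1 1 0 : ℚ))
  | OnePoint.some x =>
      if (A.1 1 0 : ℚ) * x + (A.1 1 1 : ℚ) = 0 then OnePoint.infty
      else OnePoint.some (((A.1 0 0 : ℚ) * x + (A.1 0 1 : ℚ)) /
        ((A.1 1 0 : ℚ) * x + (A.1 1 1 : ℚ)))

/-- Farey adjacency on `ℚ ∪ {∞}`: the reduced fractions `p/q` and `r/s`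
are adjacent iff `|ps - qr| = 1`, where `∞ = 1/0`.  (Rationals in Lean are
stored in lowest terms with positive denominator.) -/
def fareyAdj : OnePoint ℚ → OnePoint ℚ → Prop
  | OnePoint.infty, OnePoint.infty => False
  | OnePoint.infty, OnePoint.some x => x.den = 1
  | OnePoint.some x, OnePoint.infty => x.den = 1
  | OnePoint.some x, OnePoint.some y => |x.num * (y.den : ℤ) - (x.den : ℤ) * y.num| = 1


namespace PeriodicAux


def pr : OnePoint ℚ → ℤ × ℤ
  | OnePoint.infty => (1, 0)
  | OnePoint.some x => (x.num, (x.den : ℤ))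

lemma pr_infty : pr (OnePoint.infty : OnePoint ℚ) = (1, 0) := rfl

lemma pr_coe (x : ℚ) : pr (OnePoint.some x) = (x.num, (x.den : ℤ)) := rfl

lemma pr_snd_nonneg (v : OnePoint ℚ) : 0 ≤ (pr v).2 := by
  cases v with
  | infty => simp [pr_infty]
  | coe x => rw [show ((x : OnePoint ℚ)) = OnePoint.some x from rfl, pr_coe]; positivity

lemma pr_snd_eq_zero {v : OnePoint ℚ} (h : (pr v).2 = 0) : v = OnePoint.infty := by
  cases v with
  | infty => rfl
  | coe x =>
      rw [show ((x : OnePoint ℚ)) = OnePoint.some x from rfl, pr_coe] at h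
      simp at h

lemma pr_ne_zero (v : OnePoint ℚ) : ¬((pr v).1 = 0 ∧ (pr v).2 = 0) := by
  rintro ⟨h1, h2⟩
  cases v with
  | infty => simp [pr_infty] at h1
  | coe x =>
      rw [show ((x : OnePoint ℚ)) = OnePoint.some x from rfl, pr_coe] at h2
      simp at h2

lemma pr_det_eq_zero {v w : OnePoint ℚ}
    (h : (pr v).1 * (pr w).2 - (pr w).1 * (pr v).2 = 0) : v = w := by
  cases v with
  | infty =>
      cases w with
      | infty => rfl
      | coe y =>
          rw [show ((y : OnePoint ℚ)) = OnePoint.some y from rfl, pr_coe, pr_infty] at h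
          simp at h
  | coe x =>
      cases w with
      | infty =>
          rw [show ((x : OnePoint ℚ)) = OnePoint.some x from rfl, pr_coe, pr_infty] at h
          simp at h
      | coe y =>
          rw [show ((x : OnePoint ℚ)) = OnePoint.some x from rfl,
            show ((y : OnePoint ℚ)) = OnePoint.some y from rfl, pr_coe, pr_coe] at h
          have hx : ((x.den : ℚ)) ≠ 0 := by exact_mod_cast x.den_nz
          have hy : ((y.den : ℚ)) ≠ 0 := by exact_mod_cast y.den_nz
          have : (x.num : ℚ) / x.den = (y.num : ℚ) / y.den := by
            rw [div_eq_div_iff hx hy]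
            exact_mod_cast (by linarith : (x.num : ℤ) * y.den = y.num * x.den)
          rw [Rat.num_div_den, Rat.num_div_den] at this
          exact congrArg _ this

lemma int_sign_mul {s : ℤ} (hs : s ≠ 0) : s.sign * s = |s| := by
  rcases hs.lt_or_gt with h | h
  · rw [Int.sign_eq_neg_one_of_neg h, abs_of_neg h]; ring
  · rw [Int.sign_eq_one_of_pos h, abs_of_pos h]; ring

lemma rat_cop (x : ℚ) : IsCoprime x.num (x.den : ℤ) := by
  rw [Int.isCoprime_iff_gcd_eq_one]
  simpa [Int.gcd] using x.reduced

lemma ratND {r s : ℤ} (hs : s ≠ 0) (h : IsCoprime r s) :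
    ((r : ℚ) / s).num = s.sign * r ∧ (((r : ℚ) / s).den : ℤ) = |s| := by
  set y := (r : ℚ) / s with hy
  have hsQ : (s : ℚ) ≠ 0 := by exact_mod_cast hs
  have hdQ : ((y.den : ℚ)) ≠ 0 := by exact_mod_cast y.den_nz
  have key : y.num * s = r * (y.den : ℤ) := by
    have h1 : y * (s : ℚ) = r := div_mul_cancel₀ _ hsQ
    have h2 : y * (y.den : ℚ) = (y.num : ℚ) :=
      (eq_div_iff hdQ).mp (Rat.num_div_den y).symm
    have : (y.num : ℚ) * s = r * (y.den : ℚ) := by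
      rw [← h2, mul_right_comm, h1]
    exact_mod_cast this
  have cy : IsCoprime y.num (y.den : ℤ) := rat_cop y
  have hd1 : (y.den : ℤ) ∣ s := by
    refine (cy.symm.dvd_of_dvd_mul_left ?_)
    exact ⟨r, by linarith⟩
  have hs1 : s ∣ (y.den : ℤ) := by
    refine (h.symm.dvd_of_dvd_mul_left ?_)
    exact ⟨y.num, by linarith⟩
  have hden : (y.den : ℤ) = |s| := by
    refine Int.dvd_antisymm (by positivity) (abs_nonneg s) ?_ ?_
    · exact (dvd_abs _ _).mpr hd1
    · exact (abs_dvd _ _).mpr hs1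
  refine ⟨?_, hden⟩
  have hss : s.sign * s = |s| := int_sign_mul hs
  have : y.num * s = (s.sign * r) * s := by
    rw [key, hden, ← hss]; ring
  exact mul_right_cancel₀ hs this

lemma sl_det (B : SL2Z) : B.1 0 0 * B.1 1 1 - B.1 0 1 * B.1 1 0 = 1 := by
  have := B.2
  rwa [Matrix.det_fin_two] at this

lemma sign_pm {s : ℤ} (hs : s ≠ 0) : s.sign = 1 ∨ s.sign = -1 := by
  rcases hs.lt_or_gt with h | h
  · exact Or.inr (Int.sign_eq_neg_one_of_neg h)
  · exact Or.inl (Int.sign_eq_one_of_pos h)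

lemma pr_mob (B : SL2Z) (v : OnePoint ℚ) :
    ∃ s : ℤ, (s = 1 ∨ s = -1) ∧
      (pr (mob B v)).1 = s * (B.1 0 0 * (pr v).1 + B.1 0 1 * (pr v).2) ∧
      (pr (mob B v)).2 = s * (B.1 1 0 * (pr v).1 + B.1 1 1 * (pr v).2) := by
  have hdet := sl_det B
  set a := B.1 0 0 with ha
  set b := B.1 0 1 with hb
  set c := B.1 1 0 with hc
  set d := B.1 1 1 with hd
  cases v with
  | infty =>
      rw [pr_infty]
      by_cases h0 : (c : ℚ) = 0
      · have hc0 : c = 0 := by exact_mod_cast h0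
        have hm : mob B OnePoint.infty = OnePoint.infty := by simp [mob, ← hc, h0]
        rw [hm, pr_infty]
        have had : a * d = 1 := by rw [hc0] at hdet; linarith
        refine ⟨a, ?_, ?_, ?_⟩
        · exact (Int.mul_eq_one_iff_eq_one_or_neg_one.mp had).imp (fun h => h.1) (fun h => h.1)
        · rcases Int.mul_eq_one_iff_eq_one_or_neg_one.mp had with ⟨h1, _⟩ | ⟨h1, _⟩ <;>
            simp [h1]
        · simp [hc0]
      · have hc0 : c ≠ 0 := fun h => h0 (by exact_mod_cast h)
        have hm : mob B OnePoint.infty = OnePoint.some ((a : ℚ) / c) := by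
          simp [mob, ← hc, ← ha, h0]
        have cop : IsCoprime a c := ⟨d, -b, by linarith⟩
        obtain ⟨hn, hdn⟩ := ratND hc0 cop
        refine ⟨c.sign, sign_pm hc0, ?_, ?_⟩
        · rw [hm, pr_coe]; simpa using hn
        · rw [hm, pr_coe]; simp only []
          show ((((a:ℚ)/c).den : ℤ)) = c.sign * (c * 1 + d * 0)
          rw [hdn, ← int_sign_mul hc0]; ring
  | coe x =>
      rw [show ((x : OnePoint ℚ)) = OnePoint.some x from rfl, pr_coe]
      set p := x.num with hp
      set q := (x.den : ℤ) with hq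
      have hq0 : q ≠ 0 := by rw [hq]; exact_mod_cast x.den_nz
      have hqQ : (q : ℚ) ≠ 0 := by exact_mod_cast hq0
      have hxq : (x : ℚ) = (p : ℚ) / q := by
        rw [hp, hq]; push_cast; exact (Rat.num_div_den x).symm
      obtain ⟨u, w, huw⟩ := rat_cop x
      have huw' : u * p + w * q = 1 := huw
      have hkey : (c : ℚ) * x + d = ((c * p + d * q : ℤ) : ℚ) / q := by
        rw [hxq]; push_cast; field_simp
      by_cases h0 : (c : ℚ) * x + (d : ℚ) = 0
      · have hint : c * p + d * q = 0 := by
          have h1 : ((c * p + d * q : ℤ) : ℚ) / q = 0 := hkey.symm.trans h0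
          rcases div_eq_zero_iff.mp h1 with h2 | h2
          · exact_mod_cast h2
          · exact absurd h2 hqQ
        have hm : mob B (OnePoint.some x) = OnePoint.infty := by
          simp [mob, ← hc, ← hd, h0]
        rw [hm, pr_infty]
        have hunit : (u * d - w * c) * (a * p + b * q) = 1 := by
          linear_combination (a * d - b * c) * huw' + hdet + (u * b - w * a) * hint
        have hs : a * p + b * q = 1 ∨ a * p + b * q = -1 := by
          rcases Int.mul_eq_one_iff_eq_one_or_neg_one.mp hunit with ⟨_, h2⟩ | ⟨_, h2⟩
          · exact Or.inl h2
          · exact Or.inr h2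
        refine ⟨a * p + b * q, hs, ?_, ?_⟩
        · rcases hs with h1 | h1 <;> rw [h1] <;> ring
        · rw [hint]; ring
      · have hcd0 : c * p + d * q ≠ 0 := by
          intro h
          apply h0
          rw [hkey, h]; simp
        have hm : mob B (OnePoint.some x) =
            OnePoint.some (((a * p + b * q : ℤ) : ℚ) / ((c * p + d * q : ℤ) : ℚ)) := by
          simp only [mob, ← ha, ← hb, ← hc, ← hd, if_neg h0]
          congr 1
          rw [hxq]; push_cast; field_simp
        have cop : IsCoprime (a * p + b * q) (c * p + d * q) :=
          ⟨u * d - w * c, w * a - u * b, by linear_combination (a * d - b * c) * huw' + hdet⟩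
        obtain ⟨hn, hdn⟩ := ratND hcd0 cop
        refine ⟨(c * p + d * q).sign, sign_pm hcd0, ?_, ?_⟩
        · rw [hm, pr_coe]; simpa using hn
        · rw [hm, pr_coe]
          show ((((_ : ℚ)/_).den : ℤ)) = _
          rw [hdn, ← int_sign_mul hcd0]

lemma fareyAdj_iff (u w : OnePoint ℚ) :
    fareyAdj u w ↔ |(pr u).1 * (pr w).2 - (pr w).1 * (pr u).2| = 1 := by
  cases u with
  | infty =>
      cases w with
      | infty => norm_num [fareyAdj, pr_infty]
      | coe y =>
          rw [show ((y : OnePoint ℚ)) = OnePoint.some y from rfl]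
          show y.den = 1 ↔ _
          rw [pr_infty, pr_coe]
          simp only [one_mul, mul_zero, sub_zero, Int.abs_natCast]
          exact_mod_cast Iff.rfl
  | coe x =>
      cases w with
      | infty =>
          rw [show ((x : OnePoint ℚ)) = OnePoint.some x from rfl]
          show x.den = 1 ↔ _
          rw [pr_infty, pr_coe]
          simp only [mul_zero, one_mul, zero_sub, abs_neg, Int.abs_natCast]
          exact_mod_cast Iff.rfl
      | coe y =>
          rw [show ((x : OnePoint ℚ)) = OnePoint.some x from rfl,
            show ((y : OnePoint ℚ)) = OnePoint.some y from rfl]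
          show |x.num * (y.den : ℤ) - (x.den : ℤ) * y.num| = 1 ↔ _
          rw [pr_coe, pr_coe]
          constructor <;> intro h <;> [skip; skip] <;>
            · rw [show x.num * ((y.num, (y.den:ℤ)).2) - (y.num, (y.den:ℤ)).1 * ((x.num, (x.den:ℤ)).2) = x.num * (y.den:ℤ) - (x.den:ℤ) * y.num from by push_cast; ring] at *
              assumption

lemma mob_one (v : OnePoint ℚ) : mob 1 v = v := by
  cases v with
  | infty => simp [mob]
  | coe x =>
      rw [show ((x : OnePoint ℚ)) = OnePoint.some x from rfl]
      simp [mob]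

lemma mob_neg_one (v : OnePoint ℚ) : mob (-1) v = v := by
  cases v with
  | infty => simp [mob]
  | coe x =>
      rw [show ((x : OnePoint ℚ)) = OnePoint.some x from rfl]
      simp only [mob]
      norm_num

lemma mob_mul (B C : SL2Z) (v : OnePoint ℚ) : mob (B * C) v = mob B (mob C v) := by
  obtain ⟨s1, hs1, f1, g1⟩ := pr_mob B (mob C v)
  obtain ⟨s2, hs2, f2, g2⟩ := pr_mob C v
  obtain ⟨s3, hs3, f3, g3⟩ := pr_mob (B * C) v
  have hBC : ∀ i j, (B * C).1 i j = B.1 i 0 * C.1 0 j + B.1 i 1 * C.1 1 j := by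
    intro i j
    rw [Matrix.SpecialLinearGroup.coe_mul, Matrix.mul_apply, Fin.sum_univ_two]
  apply pr_det_eq_zero
  rw [f3, g3, f1, g1, f2, g2, hBC 0 0, hBC 0 1, hBC 1 0, hBC 1 1]
  ring

lemma adj_mob (B : SL2Z) (u w : OnePoint ℚ) :
    fareyAdj (mob B u) (mob B w) ↔ fareyAdj u w := by
  have hdet := sl_det B
  rw [fareyAdj_iff, fareyAdj_iff]
  obtain ⟨s1, hs1, f1, g1⟩ := pr_mob B u
  obtain ⟨s2, hs2, f2, g2⟩ := pr_mob B w
  have key : (pr (mob B u)).1 * (pr (mob B w)).2 - (pr (mob B w)).1 * (pr (mob B u)).2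
      = (s1 * s2) * ((pr u).1 * (pr w).2 - (pr w).1 * (pr u).2) := by
    rw [f1, g1, f2, g2]
    linear_combination (s1 * s2 * ((pr u).1 * (pr w).2 - (pr w).1 * (pr u).2)) * hdet
  rw [key, abs_mul]
  rcases hs1 with rfl | rfl <;> rcases hs2 with rfl | rfl <;> norm_num

lemma pm_of_sq_eq_one {x : ℤ} (h : x ^ 2 = 1) : x = 1 ∨ x = -1 :=
  Int.eq_one_or_neg_one_of_mul_eq_one (by linear_combination h)

lemma cQpos (a b c d p q : ℤ) (hdet : a * d - b * c = 1) (htr : (a + d) ^ 2 ≤ 1)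
    (hc : c ≠ 0) (hnz : ¬(p = 0 ∧ q = 0)) :
    0 < c * (c * p ^ 2 + (d - a) * p * q - b * q ^ 2) := by
  have id1 : 4 * (c * (c * p ^ 2 + (d - a) * p * q - b * q ^ 2)) =
      (2 * c * p + (d - a) * q) ^ 2 + (4 - (a + d) ^ 2) * q ^ 2 := by
    linear_combination (4 * q ^ 2) * hdet
  by_cases hq : q = 0
  · have hp : p ≠ 0 := fun h => hnz ⟨h, hq⟩
    have hc1 : 1 ≤ c ^ 2 := by nlinarith [Int.one_le_abs hc, sq_abs c, abs_nonneg c]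
    have hp1 : 1 ≤ p ^ 2 := by nlinarith [Int.one_le_abs hp, sq_abs p, abs_nonneg p]
    have hcp : 1 ≤ (c * p) ^ 2 := by nlinarith
    subst hq
    nlinarith [id1, hcp]
  · have h1 : 1 ≤ q ^ 2 := by
      have := Int.one_le_abs hq
      nlinarith [sq_abs q]
    nlinarith [sq_nonneg (2 * c * p + (d - a) * q)]

lemma pair_core (t Q Q' B Y c : ℤ) (htr : t ^ 2 ≤ 1)
    (hQ : |Q| = 1) (hQ' : |Q'| = 1) (hcQ : 0 < c * Q) (hcQ' : 0 < c * Q')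
    (hid : B ^ 2 - (t ^ 2 - 4) * Y ^ 2 = 4 * (Q * Q')) (hY : Y ≠ 0) :
    Y ^ 2 = 1 ∧ B ^ 2 = t ^ 2 ∧ Q = Q' := by
  have hQ2 : Q ^ 2 = 1 := by nlinarith [sq_abs Q]
  have hQ'2 : Q' ^ 2 = 1 := by nlinarith [sq_abs Q']
  have hQQ' : Q = Q' := by
    rcases pm_of_sq_eq_one hQ2 with rfl | rfl <;> rcases pm_of_sq_eq_one hQ'2 with rfl | rfl <;>
      first
      | rfl
      | (exfalso; nlinarith [hcQ, hcQ'])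
  have hprod : Q * Q' = 1 := by rcases pm_of_sq_eq_one hQ2 with h | h <;> rw [hQQ'] at h <;>
    rw [hQQ', h] <;> norm_num
  rw [hprod] at hid
  have hY2 : 1 ≤ Y ^ 2 := by
    have := Int.one_le_abs hY
    nlinarith [sq_abs Y]
  have hYeq : Y ^ 2 = 1 := by nlinarith [sq_nonneg B]
  exact ⟨hYeq, by nlinarith, hQQ'⟩

lemma pair_lemma (a b c d : ℤ) (hdet : a * d - b * c = 1) (htr : (a + d) ^ 2 ≤ 1)
    (hc : c ≠ 0) (p q p' q' : ℤ) (hnz : ¬(p = 0 ∧ q = 0)) (hnz' : ¬(p' = 0 ∧ q' = 0))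
    (hQ : |c * p ^ 2 + (d - a) * p * q - b * q ^ 2| = 1)
    (hQ' : |c * p' ^ 2 + (d - a) * p' * q' - b * q' ^ 2| = 1)
    (hY : p * q' - p' * q ≠ 0) :
    (p * q' - p' * q) ^ 2 = 1 ∧
    (2 * c * p * p' + (d - a) * (p * q' + p' * q) - 2 * b * q * q') ^ 2 = (a + d) ^ 2 ∧
    c * p ^ 2 + (d - a) * p * q - b * q ^ 2 = c * p' ^ 2 + (d - a) * p' * q' - b * q' ^ 2 := by
  have hid : (2 * c * p * p' + (d - a) * (p * q' + p' * q) - 2 * b * q * q') ^ 2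
      - ((a + d) ^ 2 - 4) * (p * q' - p' * q) ^ 2
      = 4 * ((c * p ^ 2 + (d - a) * p * q - b * q ^ 2) *
             (c * p' ^ 2 + (d - a) * p' * q' - b * q' ^ 2)) := by
    linear_combination (-4 * (p * q' - p' * q) ^ 2) * hdet
  obtain ⟨h1, h2, h3⟩ := pair_core (a + d) _ _ _ _ c htr hQ hQ'
    (cQpos a b c d p q hdet htr hc hnz) (cQpos a b c d p' q' hdet htr hc hnz') hid hY
  exact ⟨h1, h2, h3⟩

lemma triple_zero (a b c d : ℤ) (hdet : a * d - b * c = 1) (ht : a + d = 0) (hc : c ≠ 0)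
    (p1 q1 p2 q2 p3 q3 : ℤ)
    (hnz1 : ¬(p1 = 0 ∧ q1 = 0)) (hnz2 : ¬(p2 = 0 ∧ q2 = 0)) (hnz3 : ¬(p3 = 0 ∧ q3 = 0))
    (hQ1 : |c * p1 ^ 2 + (d - a) * p1 * q1 - b * q1 ^ 2| = 1)
    (hQ2 : |c * p2 ^ 2 + (d - a) * p2 * q2 - b * q2 ^ 2| = 1)
    (hQ3 : |c * p3 ^ 2 + (d - a) * p3 * q3 - b * q3 ^ 2| = 1)
    (hY12 : p1 * q2 - p2 * q1 ≠ 0) (hY13 : p1 * q3 - p3 * q1 ≠ 0)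
    (hY23 : p2 * q3 - p3 * q2 ≠ 0) : False := by
  have htr : (a + d) ^ 2 ≤ 1 := by rw [ht]; norm_num
  obtain ⟨-, hB12, -⟩ := pair_lemma a b c d hdet htr hc p1 q1 p2 q2 hnz1 hnz2 hQ1 hQ2 hY12
  obtain ⟨-, hB13, -⟩ := pair_lemma a b c d hdet htr hc p1 q1 p3 q3 hnz1 hnz3 hQ1 hQ3 hY13
  rw [ht] at hB12 hB13
  norm_num at hB12 hB13
  have hB12' : (2 * c * p1 + (d - a) * q1) * p2 + ((d - a) * p1 - 2 * b * q1) * q2 = 0 := by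
    linear_combination hB12
  have hB13' : (2 * c * p1 + (d - a) * q1) * p3 + ((d - a) * p1 - 2 * b * q1) * q3 = 0 := by
    linear_combination hB13
  have hαY : (2 * c * p1 + (d - a) * q1) * (p2 * q3 - p3 * q2) = 0 := by
    linear_combination q3 * hB12' - q2 * hB13'
  have hβY : ((d - a) * p1 - 2 * b * q1) * (p2 * q3 - p3 * q2) = 0 := by
    linear_combination p2 * hB13' - p3 * hB12'
  have hα0 : 2 * c * p1 + (d - a) * q1 = 0 := by
    rcases mul_eq_zero.mp hαY with h | h
    · exact h
    · exact absurd h hY23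
  have hβ0 : (d - a) * p1 - 2 * b * q1 = 0 := by
    rcases mul_eq_zero.mp hβY with h | h
    · exact h
    · exact absurd h hY23
  have hp1 : (-4) * p1 = 0 := by
    linear_combination 2 * b * hα0 + (d - a) * hβ0 + 4 * p1 * hdet - (a + d) * p1 * ht
  have hq1 : (-4) * q1 = 0 := by
    linear_combination (d - a) * hα0 - 2 * c * hβ0 + 4 * q1 * hdet - (a + d) * q1 * ht
  exact hnz1 ⟨by omega, by omega⟩

lemma quad_core (α3 β3 α4 β4 B Q Y12 Y34 : ℤ)
    (hα3 : α3 = 1 ∨ α3 = -1) (hβ3 : β3 = 1 ∨ β3 = -1)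
    (hα4 : α4 = 1 ∨ α4 = -1) (hβ4 : β4 = 1 ∨ β4 = -1)
    (h3 : Q = 2 * Q + α3 * β3 * B) (h4 : Q = 2 * Q + α4 * β4 * B)
    (hQ : Q = 1 ∨ Q = -1)
    (hid : Y34 = (α3 * β4 - α4 * β3) * Y12) (hY : Y34 ≠ 0) : False := by
  rcases hα3 with rfl | rfl <;> rcases hβ3 with rfl | rfl <;>
    rcases hα4 with rfl | rfl <;> rcases hβ4 with rfl | rfl <;>
    rcases hQ with rfl | rfl <;>
    norm_num at h3 h4 hid ⊢ <;>
    omega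

def tr (A : SL2Z) : ℤ := A.1 0 0 + A.1 1 1

def xseq (t : ℤ) : ℕ → ℤ
  | 0 => 0
  | 1 => 1
  | n + 2 => t * xseq t (n + 1) - xseq t n

@[simp] lemma xseq_zero (t : ℤ) : xseq t 0 = 0 := rfl
@[simp] lemma xseq_one (t : ℤ) : xseq t 1 = 1 := rfl
lemma xseq_add_two (t : ℤ) (n : ℕ) : xseq t (n + 2) = t * xseq t (n + 1) - xseq t n := rfl

lemma CH' (a b c d : ℤ) (hdet : a * d - b * c = 1) :
    !![a, b; c, d] * !![a, b; c, d] = (a + d) • !![a, b; c, d] - 1 := by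
  rw [Matrix.mul_fin_two, Matrix.one_fin_two]
  simp only [Matrix.smul_of, Matrix.smul_cons, Matrix.smul_empty, smul_eq_mul]
  ext i j
  fin_cases i <;> fin_cases j <;> simp <;>
    first
    | ring1
    | linear_combination -hdet

lemma CH (A : SL2Z) : A.1 * A.1 = tr A • A.1 - 1 := by
  have h := CH' (A.1 0 0) (A.1 0 1) (A.1 1 0) (A.1 1 1) (sl_det A)
  rw [← Matrix.eta_fin_two A.1] at h
  exact h

lemma pow_formula (A : SL2Z) (n : ℕ) :
    (A ^ (n + 1)).1 = xseq (tr A) (n + 1) • A.1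
      - xseq (tr A) n • (1 : Matrix (Fin 2) (Fin 2) ℤ) := by
  induction n with
  | zero => simp
  | succ n ih =>
      rw [pow_succ, Matrix.SpecialLinearGroup.coe_mul, ih, xseq_add_two, sub_mul,
        smul_mul_assoc, smul_mul_assoc, one_mul, CH A]
      module

lemma xseq_grow (t : ℤ) (h : 2 ≤ |t|) :
    ∀ n, 1 ≤ n → 1 ≤ |xseq t n| ∧ |xseq t n| < |xseq t (n + 1)| := by
  intro n hn
  induction n, hn using Nat.le_induction with
  | base =>
      constructor
      · simp
      · show |xseq t 1| < |xseq t (0 + 2)|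
        rw [xseq_add_two]
        simp
        omega
  | succ n hn ih =>
      obtain ⟨h1, h2⟩ := ih
      constructor
      · omega
      · show |xseq t (n + 1)| < |xseq t (n + 2)|
        rw [xseq_add_two t n]
        have hlow := abs_sub_abs_le_abs_sub (t * xseq t (n + 1)) (xseq t n)
        rw [abs_mul] at hlow
        nlinarith [abs_nonneg (xseq t (n + 1)), abs_nonneg (xseq t n)]

lemma trace_sq_le (A : SL2Z) (hA1 : A ≠ 1) (hA2 : A ≠ -1)
    (hfin : ∃ k : ℕ, 1 ≤ k ∧ (A ^ k = 1 ∨ A ^ k = -1)) :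
    tr A ^ 2 ≤ 1 := by
  by_contra hcon
  push_neg at hcon
  have h2 : 2 ≤ |tr A| := by nlinarith [sq_abs (tr A), abs_nonneg (tr A)]
  obtain ⟨k, hk1, hk⟩ := hfin
  obtain ⟨m, rfl⟩ : ∃ m, k = m + 1 := ⟨k - 1, by omega⟩
  have hpf := pow_formula A m
  have hx := (xseq_grow (tr A) h2 (m + 1) (by omega)).1
  have hxne : xseq (tr A) (m + 1) ≠ 0 := by intro h0; rw [h0] at hx; simp at hx
  have h01 : (A ^ (m + 1)).1 0 1 = 0 := by
    rcases hk with hk | hk <;> rw [hk] <;>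
      simp [Matrix.SpecialLinearGroup.coe_one, Matrix.SpecialLinearGroup.coe_neg,
        Matrix.one_apply]
  have h10 : (A ^ (m + 1)).1 1 0 = 0 := by
    rcases hk with hk | hk <;> rw [hk] <;>
      simp [Matrix.SpecialLinearGroup.coe_one, Matrix.SpecialLinearGroup.coe_neg,
        Matrix.one_apply]
  rw [hpf] at h01 h10
  simp only [Matrix.sub_apply, Matrix.smul_apply, Matrix.one_apply, smul_eq_mul] at h01 h10
  norm_num at h01 h10
  have hb : A.1 0 1 = 0 := by
    rcases h01 with h | h
    · exact absurd h hxne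
    · exact h
  have hc : A.1 1 0 = 0 := by
    rcases h10 with h | h
    · exact absurd h hxne
    · exact h
  have hdet := sl_det A
  rw [hb, hc] at hdet
  simp at hdet
  rcases Int.mul_eq_one_iff_eq_one_or_neg_one.mp hdet with ⟨ha, hd⟩ | ⟨ha, hd⟩
  · exact hA1 (Matrix.SpecialLinearGroup.ext _ _ (by
      intro i j
      fin_cases i <;> fin_cases j <;>
        simp [ha, hb, hc, hd, Matrix.SpecialLinearGroup.coe_one, Matrix.one_apply]))
  · exact hA2 (Matrix.SpecialLinearGroup.ext _ _ (by
      intro i j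
      fin_cases i <;> fin_cases j <;>
        simp [ha, hb, hc, hd, Matrix.SpecialLinearGroup.coe_neg,
          Matrix.SpecialLinearGroup.coe_one, Matrix.one_apply]))

lemma A_sq (A : SL2Z) (ht : tr A = 0) : A * A = -1 := by
  have hch := CH A
  rw [ht] at hch
  simp at hch
  apply Matrix.SpecialLinearGroup.ext
  intro i j
  rw [Matrix.SpecialLinearGroup.coe_mul, hch, Matrix.SpecialLinearGroup.coe_neg,
    Matrix.SpecialLinearGroup.coe_one]

lemma A_cube (A : SL2Z) (ht : tr A ^ 2 = 1) :
    A * A * A = 1 ∨ A * A * A = -1 := by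
  have hch := CH A
  have hM : A.1 * A.1 * A.1 = (tr A ^ 2 - 1) • A.1 - tr A • (1 : Matrix (Fin 2) (Fin 2) ℤ) := by
    rw [hch, sub_mul, smul_mul_assoc, one_mul, hch]
    module
  rw [ht] at hM
  simp at hM
  rcases pm_of_sq_eq_one ht with h | h
  · right
    apply Matrix.SpecialLinearGroup.ext
    intro i j
    rw [Matrix.SpecialLinearGroup.coe_mul, Matrix.SpecialLinearGroup.coe_mul, hM, h,
      Matrix.SpecialLinearGroup.coe_neg, Matrix.SpecialLinearGroup.coe_one]
    simp
  · left
    apply Matrix.SpecialLinearGroup.ext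
    intro i j
    rw [Matrix.SpecialLinearGroup.coe_mul, Matrix.SpecialLinearGroup.coe_mul, hM, h,
      Matrix.SpecialLinearGroup.coe_one]
    simp


lemma quad_one (a b c d : ℤ) (hdet : a * d - b * c = 1) (ht : (a + d) ^ 2 = 1) (hc : c ≠ 0)
    (p1 q1 p2 q2 p3 q3 p4 q4 : ℤ)
    (hnz1 : ¬(p1 = 0 ∧ q1 = 0)) (hnz2 : ¬(p2 = 0 ∧ q2 = 0))
    (hnz3 : ¬(p3 = 0 ∧ q3 = 0)) (hnz4 : ¬(p4 = 0 ∧ q4 = 0))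
    (hQ1 : |c * p1 ^ 2 + (d - a) * p1 * q1 - b * q1 ^ 2| = 1)
    (hQ2 : |c * p2 ^ 2 + (d - a) * p2 * q2 - b * q2 ^ 2| = 1)
    (hQ3 : |c * p3 ^ 2 + (d - a) * p3 * q3 - b * q3 ^ 2| = 1)
    (hQ4 : |c * p4 ^ 2 + (d - a) * p4 * q4 - b * q4 ^ 2| = 1)
    (hY12 : p1 * q2 - p2 * q1 ≠ 0) (hY13 : p1 * q3 - p3 * q1 ≠ 0)
    (hY14 : p1 * q4 - p4 * q1 ≠ 0) (hY23 : p2 * q3 - p3 * q2 ≠ 0)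
    (hY24 : p2 * q4 - p4 * q2 ≠ 0) (hY34 : p3 * q4 - p4 * q3 ≠ 0) : False := by
  have htr : (a + d) ^ 2 ≤ 1 := le_of_eq ht
  obtain ⟨hY12sq, hB12sq, hQ12⟩ :=
    pair_lemma a b c d hdet htr hc p1 q1 p2 q2 hnz1 hnz2 hQ1 hQ2 hY12
  obtain ⟨hY13sq, -, hQ13⟩ :=
    pair_lemma a b c d hdet htr hc p1 q1 p3 q3 hnz1 hnz3 hQ1 hQ3 hY13
  obtain ⟨hY14sq, -, hQ14⟩ :=
    pair_lemma a b c d hdet htr hc p1 q1 p4 q4 hnz1 hnz4 hQ1 hQ4 hY14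
  obtain ⟨hY32sq, -, -⟩ :=
    pair_lemma a b c d hdet htr hc p3 q3 p2 q2 hnz3 hnz2 hQ3 hQ2
      (fun h => hY23 (by linarith))
  obtain ⟨hY42sq, -, -⟩ :=
    pair_lemma a b c d hdet htr hc p4 q4 p2 q2 hnz4 hnz2 hQ4 hQ2
      (fun h => hY24 (by linarith))
  obtain ⟨α3, β3, hα3, hβ3, hp3, hq3⟩ :
      ∃ α β : ℤ, (α = 1 ∨ α = -1) ∧ (β = 1 ∨ β = -1) ∧
        p3 = α * p1 + β * p2 ∧ q3 = α * q1 + β * q2 := by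
    refine ⟨(p3 * q2 - p2 * q3) * (p1 * q2 - p2 * q1),
      (p1 * q3 - p3 * q1) * (p1 * q2 - p2 * q1), ?_, ?_, ?_, ?_⟩
    · exact pm_of_sq_eq_one (by linear_combination (p1 * q2 - p2 * q1) ^ 2 * hY32sq + hY12sq)
    · exact pm_of_sq_eq_one (by linear_combination (p1 * q2 - p2 * q1) ^ 2 * hY13sq + hY12sq)
    · linear_combination (-p3) * hY12sq
    · linear_combination (-q3) * hY12sq
  obtain ⟨α4, β4, hα4, hβ4, hp4, hq4⟩ :
      ∃ α β : ℤ, (α = 1 ∨ α = -1) ∧ (β = 1 ∨ β = -1) ∧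
        p4 = α * p1 + β * p2 ∧ q4 = α * q1 + β * q2 := by
    refine ⟨(p4 * q2 - p2 * q4) * (p1 * q2 - p2 * q1),
      (p1 * q4 - p4 * q1) * (p1 * q2 - p2 * q1), ?_, ?_, ?_, ?_⟩
    · exact pm_of_sq_eq_one (by linear_combination (p1 * q2 - p2 * q1) ^ 2 * hY42sq + hY12sq)
    · exact pm_of_sq_eq_one (by linear_combination (p1 * q2 - p2 * q1) ^ 2 * hY14sq + hY12sq)
    · linear_combination (-p4) * hY12sq
    · linear_combination (-q4) * hY12sq
  have hα3sq : α3 ^ 2 = 1 := by rcases hα3 with rfl | rfl <;> norm_num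
  have hβ3sq : β3 ^ 2 = 1 := by rcases hβ3 with rfl | rfl <;> norm_num
  have hα4sq : α4 ^ 2 = 1 := by rcases hα4 with rfl | rfl <;> norm_num
  have hβ4sq : β4 ^ 2 = 1 := by rcases hβ4 with rfl | rfl <;> norm_num
  have key3 : c * p3 ^ 2 + (d - a) * p3 * q3 - b * q3 ^ 2 =
      α3 ^ 2 * (c * p1 ^ 2 + (d - a) * p1 * q1 - b * q1 ^ 2) +
      β3 ^ 2 * (c * p2 ^ 2 + (d - a) * p2 * q2 - b * q2 ^ 2) +
      α3 * β3 * (2 * c * p1 * p2 + (d - a) * (p1 * q2 + p2 * q1) - 2 * b * q1 * q2) := by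
    rw [hp3, hq3]; ring
  have key4 : c * p4 ^ 2 + (d - a) * p4 * q4 - b * q4 ^ 2 =
      α4 ^ 2 * (c * p1 ^ 2 + (d - a) * p1 * q1 - b * q1 ^ 2) +
      β4 ^ 2 * (c * p2 ^ 2 + (d - a) * p2 * q2 - b * q2 ^ 2) +
      α4 * β4 * (2 * c * p1 * p2 + (d - a) * (p1 * q2 + p2 * q1) - 2 * b * q1 * q2) := by
    rw [hp4, hq4]; ring
  have hcore3 : c * p1 ^ 2 + (d - a) * p1 * q1 - b * q1 ^ 2 =
      2 * (c * p1 ^ 2 + (d - a) * p1 * q1 - b * q1 ^ 2) +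
      α3 * β3 * (2 * c * p1 * p2 + (d - a) * (p1 * q2 + p2 * q1) - 2 * b * q1 * q2) := by
    linear_combination key3 + (c * p1 ^ 2 + (d - a) * p1 * q1 - b * q1 ^ 2) * hα3sq +
      (c * p2 ^ 2 + (d - a) * p2 * q2 - b * q2 ^ 2) * hβ3sq + hQ13 - hQ12
  have hcore4 : c * p1 ^ 2 + (d - a) * p1 * q1 - b * q1 ^ 2 =
      2 * (c * p1 ^ 2 + (d - a) * p1 * q1 - b * q1 ^ 2) +
      α4 * β4 * (2 * c * p1 * p2 + (d - a) * (p1 * q2 + p2 * q1) - 2 * b * q1 * q2) := by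
    linear_combination key4 + (c * p1 ^ 2 + (d - a) * p1 * q1 - b * q1 ^ 2) * hα4sq +
      (c * p2 ^ 2 + (d - a) * p2 * q2 - b * q2 ^ 2) * hβ4sq + hQ14 - hQ12
  have hid : p3 * q4 - p4 * q3 = (α3 * β4 - α4 * β3) * (p1 * q2 - p2 * q1) := by
    rw [hp3, hq3, hp4, hq4]; ring
  have hQpm : c * p1 ^ 2 + (d - a) * p1 * q1 - b * q1 ^ 2 = 1 ∨
      c * p1 ^ 2 + (d - a) * p1 * q1 - b * q1 ^ 2 = -1 :=
    pm_of_sq_eq_one (by rw [← sq_abs, hQ1]; norm_num)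
  exact quad_core α3 β3 α4 β4 _ _ (p1 * q2 - p2 * q1) (p3 * q4 - p4 * q3)
    hα3 hβ3 hα4 hβ4 hcore3 hcore4 hQpm hid hY34

lemma c_ne (A : SL2Z) (htr : tr A ^ 2 ≤ 1) : A.1 1 0 ≠ 0 := by
  intro h
  have hdet := sl_det A
  rw [h] at hdet
  simp at hdet
  rcases Int.mul_eq_one_iff_eq_one_or_neg_one.mp hdet with ⟨ha, hd⟩ | ⟨ha, hd⟩ <;>
    · rw [show tr A = A.1 0 0 + A.1 1 1 from rfl, ha, hd] at htr
      norm_num at htr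

lemma nofix (A : SL2Z) (htr : tr A ^ 2 ≤ 1) (v : OnePoint ℚ) : mob A v ≠ v := by
  have hdet := sl_det A
  have hc := c_ne A htr
  have hcQ : (A.1 1 0 : ℚ) ≠ 0 := by exact_mod_cast hc
  cases v with
  | infty => simp [mob, hcQ]
  | coe x =>
      rw [show ((x : OnePoint ℚ)) = OnePoint.some x from rfl]
      simp only [mob]
      by_cases h0 : (A.1 1 0 : ℚ) * x + (A.1 1 1 : ℚ) = 0
      · rw [if_pos h0]
        exact OnePoint.infty_ne_coe x
      · rw [if_neg h0]
        intro h
        have hx : ((A.1 0 0 : ℚ) * x + A.1 0 1) / ((A.1 1 0 : ℚ) * x + A.1 1 1) = x :=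
          Option.some.inj h
        rw [div_eq_iff h0] at hx
        have htrQ : ((A.1 0 0 : ℚ) + A.1 1 1) ^ 2 ≤ 1 := by
          exact_mod_cast (htr : (A.1 0 0 + A.1 1 1) ^ 2 ≤ 1)
        have hdetQ : (A.1 0 0 : ℚ) * A.1 1 1 - A.1 0 1 * A.1 1 0 = 1 := by exact_mod_cast hdet
        have hQ0 : (A.1 1 0 : ℚ) * x ^ 2 + ((A.1 1 1 : ℚ) - A.1 0 0) * x - A.1 0 1 = 0 := by
          linear_combination -hx
        have key : (2 * (A.1 1 0 : ℚ) * x + ((A.1 1 1 : ℚ) - A.1 0 0)) ^ 2 =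
            ((A.1 0 0 : ℚ) + A.1 1 1) ^ 2
            - 4 * ((A.1 0 0 : ℚ) * A.1 1 1 - (A.1 0 1 : ℚ) * A.1 1 0)
            + 4 * (A.1 1 0 : ℚ) *
              ((A.1 1 0 : ℚ) * x ^ 2 + ((A.1 1 1 : ℚ) - A.1 0 0) * x - A.1 0 1) := by
          ring
        rw [hQ0, hdetQ] at key
        nlinarith [sq_nonneg (2 * (A.1 1 0 : ℚ) * x + ((A.1 1 1 : ℚ) - A.1 0 0)), key, htrQ]

lemma mem_iff (A : SL2Z) (htr : tr A ^ 2 ≤ 1) (v : OnePoint ℚ) :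
    (mob A v = v ∨ fareyAdj (mob A v) v) ↔
    |A.1 1 0 * (pr v).1 ^ 2 + (A.1 1 1 - A.1 0 0) * (pr v).1 * (pr v).2
      - A.1 0 1 * (pr v).2 ^ 2| = 1 := by
  rw [or_iff_right (nofix A htr v), fareyAdj_iff]
  obtain ⟨s, hs, h1, h2⟩ := pr_mob A v
  rw [h1, h2]
  have e : s * (A.1 0 0 * (pr v).1 + A.1 0 1 * (pr v).2) * (pr v).2 -
      (pr v).1 * (s * (A.1 1 0 * (pr v).1 + A.1 1 1 * (pr v).2)) =
      (-s) * (A.1 1 0 * (pr v).1 ^ 2 + (A.1 1 1 - A.1 0 0) * (pr v).1 * (pr v).2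
        - A.1 0 1 * (pr v).2 ^ 2) := by ring
  rw [e, abs_mul]
  rcases hs with rfl | rfl <;> norm_num

end PeriodicAux

open PeriodicAux in
theorem periodic_case_refined (A : SL2Z) (hA1 : A ≠ 1) (hA2 : A ≠ -1)
    (hfin : ∃ k : ℕ, 1 ≤ k ∧ (A ^ k = 1 ∨ A ^ k = -1)) :
    {v : OnePoint ℚ | mob A v = v ∨ fareyAdj (mob A v) v}.Finite ∧
    {v : OnePoint ℚ | mob A v = v ∨ fareyAdj (mob A v) v}.ncard ≤ 3 ∧
    (∀ v ∈ {v : OnePoint ℚ | mob A v = v ∨ fareyAdj (mob A v) v}, mob A v ≠ v) ∧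
    (∀ v ∈ {v : OnePoint ℚ | mob A v = v ∨ fareyAdj (mob A v) v},
     ∀ w ∈ {v : OnePoint ℚ | mob A v = v ∨ fareyAdj (mob A v) v},
      ∃ n : ℤ, mob (A ^ n) v = w) := by
  classical
  have htr := trace_sq_le A hA1 hA2 hfin
  have hdet := sl_det A
  have hc := c_ne A htr
  have hnofix := nofix A htr
  set S := {v : OnePoint ℚ | mob A v = v ∨ fareyAdj (mob A v) v} with hSdef
  have hmem : ∀ v, v ∈ S ↔
      |A.1 1 0 * (pr v).1 ^ 2 + (A.1 1 1 - A.1 0 0) * (pr v).1 * (pr v).2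
        - A.1 0 1 * (pr v).2 ^ 2| = 1 := fun v => mem_iff A htr v
  have hinv : ∀ v ∈ S, mob A v ∈ S := by
    intro v hv
    have hv' : mob A v = v ∨ fareyAdj (mob A v) v := hv
    rcases hv' with h | h
    · exact absurd h (hnofix v)
    · exact Or.inr ((adj_mob A (mob A v) v).mpr h)
  have hdist : ∀ v w : OnePoint ℚ, v ≠ w →
      (pr v).1 * (pr w).2 - (pr w).1 * (pr v).2 ≠ 0 :=
    fun v w hvw h => hvw (pr_det_eq_zero h)
  rcases Set.eq_empty_or_nonempty S with hSe | ⟨v0, hv0⟩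
  · refine ⟨by rw [hSe]; exact Set.finite_empty, by rw [hSe]; simp, fun v _ => hnofix v, ?_⟩
    intro v hv
    rw [hSe] at hv
    exact absurd hv (Set.notMem_empty v)
  · have hQv0 := (hmem v0).mp hv0
    have htcase : tr A = 0 ∨ tr A ^ 2 = 1 := by
      by_cases h : tr A = 0
      · exact Or.inl h
      · right
        have h2 : 1 ≤ tr A ^ 2 := by nlinarith [sq_abs (tr A), Int.one_le_abs h]
        exact le_antisymm htr h2
    have e0 : ∀ u : OnePoint ℚ, mob (A ^ (0 : ℤ)) u = u := fun u => by
      rw [zpow_zero]; exact mob_one u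
    have e1 : ∀ u : OnePoint ℚ, mob (A ^ (1 : ℤ)) u = mob A u := fun u => by rw [zpow_one]
    have e2 : ∀ u : OnePoint ℚ, mob (A ^ (2 : ℤ)) u = mob A (mob A u) := fun u => by
      rw [show (2 : ℤ) = 1 + 1 by norm_num, _root_.zpow_add, zpow_one, mob_mul]
    rcases htcase with ht0 | ht1
    · -- trace zero : order two
      have hAA : ∀ u, mob A (mob A u) = u := fun u => by
        rw [← mob_mul, A_sq A ht0, mob_neg_one]
      have hd01 : v0 ≠ mob A v0 := fun h => hnofix v0 h.symm
      have hw1 : mob A v0 ∈ S := hinv v0 hv0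
      have hsub : S ⊆ {v0, mob A v0} := by
        intro u hu
        by_contra hne
        simp only [Set.mem_insert_iff, Set.mem_singleton_iff] at hne
        push_neg at hne
        obtain ⟨h1, h2⟩ := hne
        exact triple_zero (A.1 0 0) (A.1 0 1) (A.1 1 0) (A.1 1 1) hdet ht0 hc
          (pr v0).1 (pr v0).2 (pr (mob A v0)).1 (pr (mob A v0)).2 (pr u).1 (pr u).2
          (pr_ne_zero _) (pr_ne_zero _) (pr_ne_zero _)
          hQv0 ((hmem _).mp hw1) ((hmem u).mp hu)
          (hdist _ _ hd01) (hdist _ _ (Ne.symm h1)) (hdist _ _ (Ne.symm h2))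
      have hfin2 : ({v0, mob A v0} : Set (OnePoint ℚ)).Finite :=
        (Set.finite_singleton _).insert _
      refine ⟨hfin2.subset hsub, ?_, fun v _ => hnofix v, ?_⟩
      · have hb := Set.ncard_le_ncard hsub hfin2
        have b1 := Set.ncard_insert_le v0 ({mob A v0} : Set (OnePoint ℚ))
        have b2 : ({mob A v0} : Set (OnePoint ℚ)).ncard = 1 := Set.ncard_singleton _
        omega
      · intro v hv w hw
        have hv' := hsub hv
        have hw' := hsub hw
        simp only [Set.mem_insert_iff, Set.mem_singleton_iff] at hv' hw'
        rcases hv' with h | h <;> rcases hw' with h' | h'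
        · exact ⟨0, by rw [h, h']; exact e0 v0⟩
        · exact ⟨1, by rw [h, h']; exact e1 v0⟩
        · exact ⟨1, by rw [h, h', e1]; exact hAA v0⟩
        · exact ⟨0, by rw [h, h']; exact e0 _⟩
    · -- trace square one : order three
      have hAAA : ∀ u, mob A (mob A (mob A u)) = u := by
        intro u
        rw [← mob_mul, ← mob_mul]
        rcases A_cube A ht1 with h3 | h3 <;> rw [h3]
        · exact mob_one u
        · exact mob_neg_one u
      have hw1 : mob A v0 ∈ S := hinv v0 hv0
      have hw2 : mob A (mob A v0) ∈ S := hinv _ hw1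
      have hd01 : v0 ≠ mob A v0 := fun h => hnofix v0 h.symm
      have hd12 : mob A v0 ≠ mob A (mob A v0) := fun h => hnofix (mob A v0) h.symm
      have hd02 : v0 ≠ mob A (mob A v0) := by
        intro h
        exact hd01 ((congrArg (mob A) h).trans (hAAA v0)).symm
      have hsub : S ⊆ {v0, mob A v0, mob A (mob A v0)} := by
        intro u hu
        by_contra hne
        simp only [Set.mem_insert_iff, Set.mem_singleton_iff] at hne
        push_neg at hne
        obtain ⟨h1, h2, h3⟩ := hne
        exact quad_one (A.1 0 0) (A.1 0 1) (A.1 1 0) (A.1 1 1) hdet ht1 hc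
          (pr v0).1 (pr v0).2 (pr (mob A v0)).1 (pr (mob A v0)).2
          (pr (mob A (mob A v0))).1 (pr (mob A (mob A v0))).2 (pr u).1 (pr u).2
          (pr_ne_zero _) (pr_ne_zero _) (pr_ne_zero _) (pr_ne_zero _)
          hQv0 ((hmem _).mp hw1) ((hmem _).mp hw2) ((hmem u).mp hu)
          (hdist _ _ hd01) (hdist _ _ hd02) (hdist _ _ (Ne.symm h1))
          (hdist _ _ hd12) (hdist _ _ (Ne.symm h2)) (hdist _ _ (Ne.symm h3))
      have hfin3 : ({v0, mob A v0, mob A (mob A v0)} : Set (OnePoint ℚ)).Finite :=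
        ((Set.finite_singleton _).insert _).insert _
      refine ⟨hfin3.subset hsub, ?_, fun v _ => hnofix v, ?_⟩
      · have hb := Set.ncard_le_ncard hsub hfin3
        have b1 := Set.ncard_insert_le v0 ({mob A v0, mob A (mob A v0)} : Set (OnePoint ℚ))
        have b2 := Set.ncard_insert_le (mob A v0) ({mob A (mob A v0)} : Set (OnePoint ℚ))
        have b3 : ({mob A (mob A v0)} : Set (OnePoint ℚ)).ncard = 1 := Set.ncard_singleton _
        omega
      · intro v hv w hw
        have hv' := hsub hv
        have hw' := hsub hw
        simp only [Set.mem_insert_iff, Set.mem_singleton_iff] at hv' hw'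
        rcases hv' with h | h | h <;> rcases hw' with h' | h' | h'
        · exact ⟨0, by rw [h, h']; exact e0 v0⟩
        · exact ⟨1, by rw [h, h']; exact e1 v0⟩
        · exact ⟨2, by rw [h, h']; exact e2 v0⟩
        · exact ⟨2, by rw [h, h', e2]; exact hAAA v0⟩
        · exact ⟨0, by rw [h, h']; exact e0 _⟩
        · exact ⟨1, by rw [h, h']; exact e1 _⟩
        · exact ⟨1, by rw [h, h', e1]; exact hAAA v0⟩
        · exact ⟨2, by rw [h, h', e2]; exact congrArg (mob A) (hAAA v0)⟩
        · exact ⟨0, by rw [h, h']; exact e0 _⟩
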